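/- arXiv:1805.07938 — 3 statements merged into one kernel-verified Lean document; each statement's English description precedes it below -/
import Mathlib

section
/- The log-likelihood of a transductive Boltzmann machine is concave: for a nonempty finite sample space S of finite subsets of a finite variable set V, a finite parameter domain B, and a finite multiset dataset D with every element of D contained in S, the function L_D(θ) = Σ_{x ∈ D} (Σ_{s ∈ B} ζ(s,x) θ(s) − ψ(θ)) (sum counted with multiplicity) is a concave function of θ : B → ℝ. -/
open Finset

/-- ζ(s,x) = 1 if s ⊆ x and 0 otherwise. -/
noncomputable def zeta {V : Type*} [DecidableEq V] (s x : Finset V) : ℝ :=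
  if s ⊆ x then 1 else 0

/-- The log-partition function ψ(θ) = log Σ_{x ∈ S} exp(Σ_{s ∈ B} ζ(s,x) θ(s)). -/
noncomputable def psi {V : Type*} [DecidableEq V] (S B : Finset (Finset V))
    (θ : Finset V → ℝ) : ℝ :=
  Real.log (∑ x ∈ S, Real.exp (∑ s ∈ B, zeta s x * θ s))

/-- The Gibbs probability p(x;θ) = exp(Σ_{s ∈ B} ζ(s,x) θ(s) − ψ(θ)). -/
noncomputable def gibbs {V : Type*} [DecidableEq V] (S B : Finset (Finset V))
    (θ : Finset V → ℝ) (x : Finset V) : ℝ :=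
  Real.exp (∑ s ∈ B, zeta s x * θ s - psi S B θ)

/-- The expectation parameter η(y;θ) = Σ_{x ∈ S} ζ(y,x) p(x;θ). -/
noncomputable def eta {V : Type*} [DecidableEq V] (S B : Finset (Finset V))
    (θ : Finset V → ℝ) (y : Finset V) : ℝ :=
  ∑ x ∈ S, zeta y x * gibbs S B θ x

lemma logsumexp_step {ι : Type*} (S : Finset ι) (hS : S.Nonempty) (u v : ι → ℝ)
    {a b : ℝ} (ha : 0 ≤ a) (hb : 0 ≤ b) (hab : a + b = 1) :
    Real.log (∑ i ∈ S, Real.exp (a * u i + b * v i)) ≤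
      a * Real.log (∑ i ∈ S, Real.exp (u i)) + b * Real.log (∑ i ∈ S, Real.exp (v i)) := by
  set P := ∑ i ∈ S, Real.exp (u i) with hPdef
  set Q := ∑ i ∈ S, Real.exp (v i) with hQdef
  have hP : 0 < P := Finset.sum_pos (fun i _ => Real.exp_pos _) hS
  have hQ : 0 < Q := Finset.sum_pos (fun i _ => Real.exp_pos _) hS
  have hPQ : 0 < P ^ a * Q ^ b := mul_pos (Real.rpow_pos_of_pos hP a) (Real.rpow_pos_of_pos hQ b)
  have key : ∑ i ∈ S, Real.exp (a * u i + b * v i) ≤ P ^ a * Q ^ b := by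
    have hle : ∀ i ∈ S, Real.exp (a * u i + b * v i) ≤
        P ^ a * Q ^ b * (a * (Real.exp (u i) / P) + b * (Real.exp (v i) / Q)) := by
      intro i _
      have h1 : Real.exp (a * u i + b * v i)
          = P ^ a * Q ^ b * ((Real.exp (u i) / P) ^ a * (Real.exp (v i) / Q) ^ b) := by
        rw [Real.div_rpow (Real.exp_pos _).le hP.le, Real.div_rpow (Real.exp_pos _).le hQ.le,
          Real.exp_add, mul_comm a, mul_comm b, Real.exp_mul, Real.exp_mul]
        field_simp
      rw [h1]
      exact mul_le_mul_of_nonneg_left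
        (Real.geom_mean_le_arith_mean2_weighted ha hb (by positivity) (by positivity) hab)
        hPQ.le
    calc ∑ i ∈ S, Real.exp (a * u i + b * v i)
        ≤ ∑ i ∈ S, P ^ a * Q ^ b * (a * (Real.exp (u i) / P) + b * (Real.exp (v i) / Q)) :=
          Finset.sum_le_sum hle
      _ = P ^ a * Q ^ b := by
          rw [← Finset.mul_sum]
          have : ∑ i ∈ S, (a * (Real.exp (u i) / P) + b * (Real.exp (v i) / Q)) = 1 := by
            rw [Finset.sum_add_distrib]
            simp only [div_eq_mul_inv, ← Finset.mul_sum, ← Finset.sum_mul]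
            rw [← hPdef, ← hQdef, mul_inv_cancel₀ hP.ne', mul_inv_cancel₀ hQ.ne']
            rw [mul_one, mul_one, hab]
          rw [this, mul_one]
  calc Real.log (∑ i ∈ S, Real.exp (a * u i + b * v i))
      ≤ Real.log (P ^ a * Q ^ b) :=
        Real.log_le_log (Finset.sum_pos (fun i _ => Real.exp_pos _) hS) key
    _ = a * Real.log P + b * Real.log Q := by
        rw [Real.log_mul (Real.rpow_pos_of_pos hP a).ne' (Real.rpow_pos_of_pos hQ b).ne',
          Real.log_rpow hP, Real.log_rpow hQ]

lemma psi_convexOn {V : Type*} [DecidableEq V] (S B : Finset (Finset V)) (hS : S.Nonempty) :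
    ConvexOn ℝ Set.univ (psi S B) := by
  refine ⟨convex_univ, fun θ _ κ _ a b ha hb hab => ?_⟩
  unfold psi
  have hrw : ∀ x : Finset V, ∑ s ∈ B, zeta s x * (a • θ + b • κ) s
      = a * (∑ s ∈ B, zeta s x * θ s) + b * (∑ s ∈ B, zeta s x * κ s) := by
    intro x
    simp only [Pi.add_apply, Pi.smul_apply, smul_eq_mul, mul_add, Finset.sum_add_distrib,
      Finset.mul_sum]
    congr 1 <;> exact Finset.sum_congr rfl fun s _ => by ring
  simp only [hrw, smul_eq_mul]
  exact logsumexp_step S hS _ _ ha hb hab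

/-- The log-likelihood of a TBM is concave in the parameter θ. -/
theorem logLikelihood_concaveOn {V : Type*} [Fintype V] [DecidableEq V]
    (S B : Finset (Finset V)) (hS : S.Nonempty)
    (D : Multiset (Finset V)) (hD : ∀ x ∈ D, x ∈ S) :
    ConcaveOn ℝ Set.univ
      (fun θ : Finset V → ℝ =>
        (D.map (fun x => ∑ s ∈ B, zeta s x * θ s - psi S B θ)).sum) := by

  have hterm : ∀ x : Finset V, ConcaveOn ℝ Set.univ
      (fun θ : Finset V → ℝ => ∑ s ∈ B, zeta s x * θ s - psi S B θ) := by
    intro x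
    have hlin : ConcaveOn ℝ Set.univ (fun θ : Finset V → ℝ => ∑ s ∈ B, zeta s x * θ s) := by
      refine ⟨convex_univ, fun θ _ κ _ a b ha hb hab => le_of_eq ?_⟩
      simp only [Pi.add_apply, Pi.smul_apply, smul_eq_mul, mul_add, Finset.sum_add_distrib,
        Finset.mul_sum]
      congr 1 <;> exact Finset.sum_congr rfl fun s _ => by ring
    exact hlin.sub (psi_convexOn S B hS)
  induction D using Multiset.induction with
  | empty => simpa using concaveOn_const 0 convex_univ
  | cons x D ih =>
      simp only [Multiset.map_cons, Multiset.sum_cons]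
      exact (hterm x).add (ih (fun y hy => hD y (Multiset.mem_cons_of_mem hy)))
end

section
/- Characterization of maximum-likelihood estimation in transductive Boltzmann machines: a parameter θ* : B → ℝ maximizes the log-likelihood L_D(θ) = Σ_{x ∈ D} (Σ_{s ∈ B} ζ(s,x) θ(s) − ψ(θ)) over all θ : B → ℝ if and only if η(y;θ*) = η̂(y) for every y ∈ B, where η(y;θ) = Σ_{x ∈ S} ζ(y,x) p(x;θ) and η̂(y) = (1/N) Σ_{x ∈ D} ζ(y,x). -/
open Finset

/-!
ψ is a log-sum-exp function: its derivative at θ in a direction v is Σ_{s ∈ B} η(s;θ) v(s), and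
Jensen's inequality for exp under the Gibbs weights p(·;θ) gives the supporting hyperplane
ψ(θ') ≥ ψ(θ) + Σ_{s ∈ B} η(s;θ) (θ'(s) − θ(s)). Hence L_D is concave with gradient
Σ_{x ∈ D} ζ(s,x) − N η(s;θ). At a maximiser every directional derivative vanishes, and a point
where the gradient vanishes is a global maximiser by the supporting hyperplane.
-/

section

variable {V : Type*} [DecidableEq V] (S B : Finset (Finset V))

lemma sum_zeta_mul_add_smul (θ v : Finset V → ℝ) (t : ℝ) (x : Finset V) :
    ∑ s ∈ B, zeta s x * (θ + t • v) s =
      ∑ s ∈ B, zeta s x * θ s + t * ∑ s ∈ B, zeta s x * v s := by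
  simp only [Pi.add_apply, Pi.smul_apply, smul_eq_mul, mul_add, sum_add_distrib, mul_sum,
    mul_left_comm t]

lemma sum_zeta_mul_sub (θ θ' : Finset V → ℝ) (x : Finset V) :
    ∑ s ∈ B, zeta s x * (θ' - θ) s = ∑ s ∈ B, zeta s x * θ' s - ∑ s ∈ B, zeta s x * θ s := by
  simp only [Pi.sub_apply, mul_sub, sum_sub_distrib]

lemma exp_psi (hS : S.Nonempty) (θ : Finset V → ℝ) :
    Real.exp (psi S B θ) = ∑ x ∈ S, Real.exp (∑ s ∈ B, zeta s x * θ s) :=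
  Real.exp_log (sum_pos (fun _ _ => Real.exp_pos _) hS)

lemma sum_exp_sum_zeta_mul_sub_psi (hS : S.Nonempty) (θ θ' : Finset V → ℝ) :
    ∑ x ∈ S, Real.exp (∑ s ∈ B, zeta s x * θ' s - psi S B θ) =
      Real.exp (psi S B θ' - psi S B θ) := by
  simp only [Real.exp_sub, ← sum_div, exp_psi S B hS]

lemma sum_gibbs (hS : S.Nonempty) (θ : Finset V → ℝ) : ∑ x ∈ S, gibbs S B θ x = 1 := by
  simpa only [gibbs, sub_self, Real.exp_zero] using sum_exp_sum_zeta_mul_sub_psi S B hS θ θ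

lemma sum_gibbs_mul_sum_zeta_mul (θ v : Finset V → ℝ) :
    ∑ x ∈ S, gibbs S B θ x * ∑ s ∈ B, zeta s x * v s = ∑ s ∈ B, eta S B θ s * v s := by
  simp only [eta, mul_sum, sum_mul]
  rw [sum_comm]
  exact sum_congr rfl fun _ _ => sum_congr rfl fun _ _ => by ring

lemma psi_add_sum_eta_mul_sub_le (hS : S.Nonempty) (θ θ' : Finset V → ℝ) :
    psi S B θ + ∑ s ∈ B, eta S B θ s * (θ' - θ) s ≤ psi S B θ' := by
  have jensen := convexOn_exp.map_sum_le (t := S) (w := gibbs S B θ)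
    (p := fun x => ∑ s ∈ B, zeta s x * (θ' - θ) s) (fun _ _ => (Real.exp_pos _).le)
    (sum_gibbs S B hS θ) (fun _ _ => Set.mem_univ _)
  have tilt : ∀ x, gibbs S B θ x • Real.exp (∑ s ∈ B, zeta s x * (θ' - θ) s) =
      Real.exp (∑ s ∈ B, zeta s x * θ' s - psi S B θ) := fun x => by
    rw [smul_eq_mul, gibbs, ← Real.exp_add, sum_zeta_mul_sub]
    ring_nf
  simp only [tilt, sum_exp_sum_zeta_mul_sub_psi S B hS, smul_eq_mul, sum_gibbs_mul_sum_zeta_mul,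
    Real.exp_le_exp] at jensen
  linarith

lemma hasDerivAt_psi_add_smul (hS : S.Nonempty) (θ v : Finset V → ℝ) :
    HasDerivAt (fun t : ℝ => psi S B (θ + t • v)) (∑ s ∈ B, eta S B θ s * v s) 0 := by
  have hZ : HasDerivAt
      (fun t : ℝ => ∑ x ∈ S, Real.exp (∑ s ∈ B, zeta s x * θ s + t * ∑ s ∈ B, zeta s x * v s))
      (∑ x ∈ S, Real.exp (∑ s ∈ B, zeta s x * θ s) * ∑ s ∈ B, zeta s x * v s) 0 :=
    HasDerivAt.fun_sum fun x _ => by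
      simpa using (((hasDerivAt_id (0 : ℝ)).mul_const _).const_add _).exp
  have hZ0 : (∑ x ∈ S, Real.exp (∑ s ∈ B, zeta s x * θ s + 0 * ∑ s ∈ B, zeta s x * v s)) =
      Real.exp (psi S B θ) := by
    simp only [zero_mul, add_zero, exp_psi S B hS]
  convert hZ.log (hZ0 ▸ (Real.exp_pos _).ne') using 1
  · simp only [psi, sum_zeta_mul_add_smul]
  · rw [hZ0, sum_div, ← sum_gibbs_mul_sum_zeta_mul]
    simp only [gibbs, Real.exp_sub, div_mul_eq_mul_div]

noncomputable def loglik (D : Multiset (Finset V)) (θ : Finset V → ℝ) : ℝ :=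
  (D.map fun x => ∑ s ∈ B, zeta s x * θ s - psi S B θ).sum

noncomputable def score (D : Multiset (Finset V)) (θ : Finset V → ℝ) (y : Finset V) : ℝ :=
  (D.map (zeta y)).sum - D.card * eta S B θ y

variable (D : Multiset (Finset V))

lemma loglik_eq (θ : Finset V → ℝ) :
    loglik S B D θ = ∑ s ∈ B, (D.map (zeta s)).sum * θ s - D.card * psi S B θ := by
  simp [loglik, Multiset.sum_map_sub, Multiset.sum_map_sum, Multiset.sum_map_mul_right]

lemma loglik_le_add_sum_score_mul_sub (hS : S.Nonempty) (θ θ' : Finset V → ℝ) :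
    loglik S B D θ' ≤ loglik S B D θ + ∑ s ∈ B, score S B D θ s * (θ' - θ) s := by
  have hψ := mul_le_mul_of_nonneg_left (psi_add_sum_eta_mul_sub_le S B hS θ θ')
    (Nat.cast_nonneg (α := ℝ) D.card)
  simp only [loglik_eq, score, Pi.sub_apply, sub_mul, mul_sub, sum_sub_distrib, mul_add,
    mul_sum, mul_assoc] at hψ ⊢
  linarith

lemma hasDerivAt_loglik_add_smul (hS : S.Nonempty) (θ v : Finset V → ℝ) :
    HasDerivAt (fun t : ℝ => loglik S B D (θ + t • v)) (∑ s ∈ B, score S B D θ s * v s) 0 := by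
  have hlin : HasDerivAt (fun t : ℝ => ∑ s ∈ B, (D.map (zeta s)).sum * (θ + t • v) s)
      (∑ s ∈ B, (D.map (zeta s)).sum * v s) 0 :=
    HasDerivAt.fun_sum fun s _ => by
      simpa using (((hasDerivAt_id (0 : ℝ)).mul_const (v s)).const_add (θ s)).const_mul _
  have hval : ∑ s ∈ B, score S B D θ s * v s =
      ∑ s ∈ B, (D.map (zeta s)).sum * v s - D.card * ∑ s ∈ B, eta S B θ s * v s := by
    simp only [score, sub_mul, sum_sub_distrib, mul_sum, mul_assoc]
  simp only [loglik_eq, hval]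
  exact hlin.sub ((hasDerivAt_psi_add_smul S B hS θ v).const_mul _)

lemma forall_loglik_le_iff_score_eq_zero (hS : S.Nonempty) (θ : Finset V → ℝ) :
    (∀ θ', loglik S B D θ' ≤ loglik S B D θ) ↔ ∀ y ∈ B, score S B D θ y = 0 := by
  constructor
  · intro hmax y hy
    have hloc : IsLocalMax (fun t : ℝ => loglik S B D (θ + t • Pi.single y 1)) 0 :=
      Filter.Eventually.of_forall fun t => by simpa using hmax (θ + t • Pi.single y 1)
    simpa [Pi.single_apply, hy] using
      hloc.hasDerivAt_eq_zero (hasDerivAt_loglik_add_smul S B D hS θ _)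
  · intro hscore θ'
    have hzero : ∑ s ∈ B, score S B D θ s * (θ' - θ) s = 0 :=
      sum_eq_zero fun s hs => by rw [hscore s hs, zero_mul]
    simpa only [hzero, add_zero] using loglik_le_add_sum_score_mul_sub S B D hS θ θ'

end

theorem mle_iff_expectation_matching_general {V : Type*} [DecidableEq V]
    (S B : Finset (Finset V)) (hS : S.Nonempty)
    (D : Multiset (Finset V)) (hDne : D ≠ 0)
    (θs : Finset V → ℝ) :
    (∀ θ : Finset V → ℝ,
        (D.map (fun x => ∑ s ∈ B, zeta s x * θ s - psi S B θ)).sum ≤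
        (D.map (fun x => ∑ s ∈ B, zeta s x * θs s - psi S B θs)).sum) ↔
      (∀ y ∈ B, eta S B θs y = (1 / (D.card : ℝ)) * (D.map (fun x => zeta y x)).sum) := by
  have hN : (D.card : ℝ) ≠ 0 := by simpa using hDne
  refine (forall_loglik_le_iff_score_eq_zero S B D hS θs).trans (forall₂_congr fun y _ => ?_)
  rw [score, sub_eq_zero, eq_comm, one_div_mul_eq_div, eq_div_iff hN, mul_comm]

/-- Characterization of MLE in TBMs: θ* maximizes the log-likelihood
L_D(θ) = Σ_{x ∈ D} (Σ_{s ∈ B} ζ(s,x) θ(s) − ψ(θ)) over all θ iff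
η(y;θ*) = η̂(y) for every y ∈ B, where η̂(y) = (1/N) Σ_{x ∈ D} ζ(y,x). -/
theorem mle_iff_expectation_matching {V : Type*} [Fintype V] [DecidableEq V]
    (S B : Finset (Finset V)) (hS : S.Nonempty)
    (D : Multiset (Finset V)) (hD : ∀ x ∈ D, x ∈ S) (hDne : D ≠ 0)
    (θs : Finset V → ℝ) :
    (∀ θ : Finset V → ℝ,
        (D.map (fun x => ∑ s ∈ B, zeta s x * θ s - psi S B θ)).sum ≤
        (D.map (fun x => ∑ s ∈ B, zeta s x * θs s - psi S B θs)).sum) ↔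
      (∀ y ∈ B, eta S B θs y = (1 / (D.card : ℝ)) * (D.map (fun x => zeta y x)).sum) :=
  mle_iff_expectation_matching_general S B hS D hDne θs
end

section
/- Pythagorean theorem for the m-projection onto a transductive Boltzmann machine family: let p* be a strictly positive probability distribution on the sample space S, and let θ_q, θ_r : B → ℝ define Gibbs distributions q = p(·;θ_q) and r = p(·;θ_r). If q matches p* in all expectation parameters over B, i.e. Σ_{x ∈ S} ζ(s,x) q(x) = Σ_{x ∈ S} ζ(s,x) p*(x) for all s ∈ B, then D_KL(p*, r) = D_KL(p*, q) + D_KL(q, r), where D_KL(u, v) = Σ_{x ∈ S} u(x) log(u(x)/v(x)). -/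
open Finset

/-- The Kullback–Leibler divergence between two distributions on S. -/
noncomputable def klDiv {V : Type*} [DecidableEq V] (S : Finset (Finset V))
    (u v : Finset V → ℝ) : ℝ :=
  ∑ x ∈ S, u x * Real.log (u x / v x)


lemma gibbs_sum {V : Type*} [DecidableEq V] (S B : Finset (Finset V)) (hS : S.Nonempty)
    (θ : Finset V → ℝ) : ∑ x ∈ S, gibbs S B θ x = 1 := by
  have hT : 0 < ∑ x ∈ S, Real.exp (∑ s ∈ B, zeta s x * θ s) :=
    Finset.sum_pos (fun x _ => Real.exp_pos _) hS
  simp only [gibbs, psi, Real.exp_sub, Real.exp_log hT, ← Finset.sum_div]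
  field_simp

lemma log_gibbs_sub {V : Type*} [DecidableEq V] (S B : Finset (Finset V))
    (θq θr : Finset V → ℝ) (x : Finset V) :
    Real.log (gibbs S B θq x / gibbs S B θr x)
      = (∑ s ∈ B, zeta s x * (θq s - θr s)) + (psi S B θr - psi S B θq) := by
  rw [gibbs, gibbs, ← Real.exp_sub, Real.log_exp]
  simp [mul_sub, Finset.sum_sub_distrib]
  ring

/-- Expected log-ratio of two Gibbs distributions under a distribution u. -/
lemma expected_logratio {V : Type*} [DecidableEq V] (S B : Finset (Finset V))
    (θq θr : Finset V → ℝ) (u : Finset V → ℝ) (husum : ∑ x ∈ S, u x = 1) :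
    ∑ x ∈ S, u x * Real.log (gibbs S B θq x / gibbs S B θr x)
      = (∑ s ∈ B, (θq s - θr s) * ∑ x ∈ S, zeta s x * u x)
        + (psi S B θr - psi S B θq) := by
  simp only [log_gibbs_sub, mul_add, Finset.sum_add_distrib, Finset.mul_sum,
    Finset.sum_mul, ← Finset.sum_mul, husum, one_mul]
  rw [Finset.sum_comm]
  congr 1
  apply Finset.sum_congr rfl
  intro s _
  apply Finset.sum_congr rfl
  intro x _
  ring

/-- Pythagorean theorem for the m-projection onto a TBM family: if the Gibbs
distribution q = p(·;θq) matches p* in all expectation parameters over B, then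
D_KL(p*, r) = D_KL(p*, q) + D_KL(q, r) for any Gibbs distribution r = p(·;θr). -/
theorem kl_pythagorean_mprojection {V : Type*} [Fintype V] [DecidableEq V]
    (S B : Finset (Finset V)) (hS : S.Nonempty)
    (pstar : Finset V → ℝ) (hpos : ∀ x ∈ S, 0 < pstar x)
    (hsum : ∑ x ∈ S, pstar x = 1)
    (θq θr : Finset V → ℝ)
    (hmatch : ∀ s ∈ B,
      ∑ x ∈ S, zeta s x * gibbs S B θq x = ∑ x ∈ S, zeta s x * pstar x) :
    klDiv S pstar (gibbs S B θr)
      = klDiv S pstar (gibbs S B θq) + klDiv S (gibbs S B θq) (gibbs S B θr) := by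
  have hq : ∀ x ∈ S, 0 < gibbs S B θq x := fun x _ => Real.exp_pos _
  have hr : ∀ x ∈ S, 0 < gibbs S B θr x := fun x _ => Real.exp_pos _
  have hqsum := gibbs_sum S B hS θq
  have key : ∑ x ∈ S, pstar x * Real.log (gibbs S B θq x / gibbs S B θr x)
      = klDiv S (gibbs S B θq) (gibbs S B θr) := by
    rw [expected_logratio S B θq θr pstar hsum]
    rw [show klDiv S (gibbs S B θq) (gibbs S B θr)
        = ∑ x ∈ S, gibbs S B θq x * Real.log (gibbs S B θq x / gibbs S B θr x) from rfl]
    rw [expected_logratio S B θq θr (gibbs S B θq) hqsum]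
    congr 1
    apply Finset.sum_congr rfl
    intro s hs
    rw [hmatch s hs]
  rw [← key]
  unfold klDiv
  rw [← Finset.sum_add_distrib]
  apply Finset.sum_congr rfl
  intro x hx
  rw [← mul_add]
  congr 1
  rw [Real.log_div (ne_of_gt (hpos x hx)) (ne_of_gt (hr x hx)),
    Real.log_div (ne_of_gt (hpos x hx)) (ne_of_gt (hq x hx)),
    Real.log_div (ne_of_gt (hq x hx)) (ne_of_gt (hr x hx))]
  ring
end
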